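/- Let n ≥ 2 and let A₀ : ℝⁿ ∖ {0} → ℝⁿ be a continuous vector field, homogeneous of degree −1, satisfying x·A₀(x) = 0 for all x ≠ 0. Then for every unit vector ω ∈ ℝⁿ and every x₀ ≠ 0 with x₀·ω = 0, the function s ↦ A₀(x₀ + sω)·ω is integrable on ℝ. -/

import Mathlib

open Real MeasureTheory RealInnerProductSpace

/-!
Homogeneity of degree `-1` and compactness of the unit sphere give `‖y‖ ‖A₀ y‖ ≤ M`. On the
line `y = x₀ + s ω` we have `‖y‖ ≥ ‖x₀‖` and `‖y‖ ≥ |s|`, so the integrand is at most `M / ‖x₀‖`,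
while transversality `⟪y, A₀ y⟫ = 0` rewrites `s ⟪A₀ y, ω⟫` as `-⟪x₀, A₀ y⟫`, which gives the
decay `s² |⟪A₀ y, ω⟫| ≤ ‖x₀‖ M`. Hence the integrand is dominated by a multiple of `(1 + s²)⁻¹`.
-/

theorem exists_norm_mul_norm_le_of_homogeneous_neg_one {E F : Type*} [NormedAddCommGroup E]
    [NormedSpace ℝ E] [ProperSpace E] [NormedAddCommGroup F] [NormedSpace ℝ F] {A : E → F}
    (hcont : ContinuousOn A {0}ᶜ)
    (hhom : ∀ t : ℝ, 0 < t → ∀ x : E, x ≠ 0 → A (t • x) = t⁻¹ • A x) :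
    ∃ M, ∀ y : E, y ≠ 0 → ‖y‖ * ‖A y‖ ≤ M := by
  obtain ⟨M, hM⟩ := (isCompact_sphere (0 : E) 1).exists_bound_of_continuousOn
    (hcont.mono fun x hx h => by simp [show x = 0 from h] at hx)
  refine ⟨M, fun y hy => ?_⟩
  have hy' : 0 < ‖y‖ := norm_pos_iff.mpr hy
  have hscale : A (‖y‖⁻¹ • y) = ‖y‖ • A y := by
    rw [hhom _ (inv_pos.mpr hy') y hy, inv_inv]
  calc ‖y‖ * ‖A y‖ = ‖A (‖y‖⁻¹ • y)‖ := by rw [hscale, norm_smul, norm_norm]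
    _ ≤ M := hM _ (by
      rw [mem_sphere_zero_iff_norm, norm_smul, norm_inv, norm_norm, inv_mul_cancel₀ hy'.ne'])

section Line

variable {E : Type*} [NormedAddCommGroup E] [InnerProductSpace ℝ E]

theorem norm_left_le_norm_add_of_inner_eq_zero {x y : E} (h : ⟪x, y⟫ = 0) : ‖x‖ ≤ ‖x + y‖ := by
  rw [mul_self_le_mul_self_iff (norm_nonneg _) (norm_nonneg _),
    norm_add_sq_eq_norm_sq_add_norm_sq_real h]
  exact le_add_of_nonneg_right (mul_self_nonneg _)

theorem norm_right_le_norm_add_of_inner_eq_zero {x y : E} (h : ⟪x, y⟫ = 0) : ‖y‖ ≤ ‖x + y‖ := by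
  rw [add_comm]
  exact norm_left_le_norm_add_of_inner_eq_zero (by rwa [real_inner_comm])

variable {x₀ ω : E}

theorem norm_le_norm_add_smul_of_inner_eq_zero (horth : ⟪x₀, ω⟫ = 0) (s : ℝ) :
    ‖x₀‖ ≤ ‖x₀ + s • ω‖ :=
  norm_left_le_norm_add_of_inner_eq_zero (by rw [real_inner_smul_right, horth, mul_zero])

theorem abs_le_norm_add_smul_of_inner_eq_zero (hω : ‖ω‖ = 1) (horth : ⟪x₀, ω⟫ = 0) (s : ℝ) :
    |s| ≤ ‖x₀ + s • ω‖ := by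
  simpa [norm_smul, hω] using
    norm_right_le_norm_add_of_inner_eq_zero (x := x₀) (y := s • ω)
      (by rw [real_inner_smul_right, horth, mul_zero])

theorem add_smul_ne_zero_of_inner_eq_zero (hx₀ : x₀ ≠ 0) (horth : ⟪x₀, ω⟫ = 0) (s : ℝ) :
    x₀ + s • ω ≠ 0 :=
  norm_pos_iff.mp ((norm_pos_iff.mpr hx₀).trans_le (norm_le_norm_add_smul_of_inner_eq_zero horth s))

theorem norm_inner_le_of_transversal {v : E} (hω : ‖ω‖ = 1) (horth : ⟪x₀, ω⟫ = 0) (hx₀ : x₀ ≠ 0)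
    {M s : ℝ} (hv : ‖x₀ + s • ω‖ * ‖v‖ ≤ M) (htrans : ⟪x₀ + s • ω, v⟫ = 0) :
    ‖⟪v, ω⟫‖ ≤ (M / ‖x₀‖ + ‖x₀‖ * M) * (1 + s ^ 2)⁻¹ := by
  have hx₀y := norm_le_norm_add_smul_of_inner_eq_zero horth s
  have hsy := abs_le_norm_add_smul_of_inner_eq_zero hω horth s
  have hvω : |⟪v, ω⟫| ≤ ‖v‖ := by simpa [hω] using abs_real_inner_le_norm v ω
  have hsvω : s * ⟪v, ω⟫ = -⟪x₀, v⟫ := by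
    rw [inner_add_left, real_inner_smul_left, real_inner_comm v ω] at htrans
    linarith
  have ha : 0 < ‖x₀‖ := norm_pos_iff.mpr hx₀
  have hnear : |⟪v, ω⟫| ≤ M / ‖x₀‖ := by
    rw [le_div_iff₀ ha]
    calc |⟪v, ω⟫| * ‖x₀‖ ≤ ‖v‖ * ‖x₀ + s • ω‖ :=
          mul_le_mul hvω hx₀y ha.le (norm_nonneg _)
      _ ≤ M := by rwa [mul_comm]
  have hfar : s ^ 2 * |⟪v, ω⟫| ≤ ‖x₀‖ * M := by
    calc s ^ 2 * |⟪v, ω⟫| = |s| * |⟪x₀, v⟫| := by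
          rw [← sq_abs, sq, mul_assoc, ← abs_mul, hsvω, abs_neg]
      _ ≤ ‖x₀ + s • ω‖ * (‖x₀‖ * ‖v‖) :=
          mul_le_mul hsy (abs_real_inner_le_norm x₀ v) (abs_nonneg _) (norm_nonneg _)
      _ ≤ ‖x₀‖ * M := by nlinarith [norm_nonneg x₀]
  rw [Real.norm_eq_abs, ← div_eq_mul_inv, le_div_iff₀ (by positivity)]
  nlinarith

end Line

theorem integrable_line_integrand_of_transversal_homogeneous_general
    (n : ℕ)
    (A₀ : EuclideanSpace ℝ (Fin n) → EuclideanSpace ℝ (Fin n))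
    (hA₀cont : ContinuousOn A₀ {0}ᶜ)
    (hA₀hom : ∀ t : ℝ, 0 < t → ∀ x : EuclideanSpace ℝ (Fin n), x ≠ 0 →
      A₀ (t • x) = t⁻¹ • A₀ x)
    (hA₀trans : ∀ x : EuclideanSpace ℝ (Fin n), x ≠ 0 → ⟪x, A₀ x⟫ = 0) :
    ∀ ω x₀ : EuclideanSpace ℝ (Fin n), ‖ω‖ = 1 → x₀ ≠ 0 → ⟪x₀, ω⟫ = 0 →
      Integrable (fun s : ℝ => ⟪A₀ (x₀ + s • ω), ω⟫) := by
  intro ω x₀ hω hx₀ horth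
  obtain ⟨M, hM⟩ := exists_norm_mul_norm_le_of_homogeneous_neg_one hA₀cont hA₀hom
  have hline (s : ℝ) : x₀ + s • ω ≠ 0 := add_smul_ne_zero_of_inner_eq_zero hx₀ horth s
  have hcont : Continuous fun s : ℝ => ⟪A₀ (x₀ + s • ω), ω⟫ :=
    (hA₀cont.comp_continuous (by fun_prop) hline).inner continuous_const
  refine (integrable_inv_one_add_sq.const_mul (M / ‖x₀‖ + ‖x₀‖ * M)).mono'
    hcont.aestronglyMeasurable (.of_forall fun s => ?_)
  exact norm_inner_le_of_transversal hω horth hx₀ (hM _ (hline s)) (hA₀trans _ (hline s))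

/-- For a continuous vector field `A₀` on `ℝⁿ \ {0}` (`n ≥ 2`), homogeneous of degree `-1`
and transversal (`x ⬝ A₀ x = 0`), the function `s ↦ A₀(x₀+sω)⬝ω` is integrable on `ℝ`
whenever `|ω| = 1`, `x₀ ≠ 0`, `x₀ ⬝ ω = 0`. -/
theorem integrable_line_integrand_of_transversal_homogeneous
    (n : ℕ) (hn : 2 ≤ n)
    (A₀ : EuclideanSpace ℝ (Fin n) → EuclideanSpace ℝ (Fin n))
    (hA₀cont : ContinuousOn A₀ {0}ᶜ)
    (hA₀hom : ∀ t : ℝ, 0 < t → ∀ x : EuclideanSpace ℝ (Fin n), x ≠ 0 →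
      A₀ (t • x) = t⁻¹ • A₀ x)
    (hA₀trans : ∀ x : EuclideanSpace ℝ (Fin n), x ≠ 0 → ⟪x, A₀ x⟫ = 0) :
    ∀ ω x₀ : EuclideanSpace ℝ (Fin n), ‖ω‖ = 1 → x₀ ≠ 0 → ⟪x₀, ω⟫ = 0 →
      Integrable (fun s : ℝ => ⟪A₀ (x₀ + s • ω), ω⟫) :=
  integrable_line_integrand_of_transversal_homogeneous_general n A₀ hA₀cont hA₀hom hA₀trans
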